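/- arXiv:0910.4758 — 3 statements merged into one kernel-verified Lean document; each statement's English description precedes it below -/
import Mathlib

section
/- Let F be an algebraically closed field, K a finite group, and H a normal subgroup of K such that the index [K : H] = p is a prime. Let V be a finite-dimensional irreducible F-representation of K. Then either the restriction V|_H is irreducible as an F-representation of H, or V|_H is isomorphic to a direct sum of p pairwise non-isomorphic irreducible F-representations of H. -/
/-!
`K` acts on the lattice of `F[H]`-submodules of `V|_H` by `k • U = ρ(k) U`, permuting the simple
ones. Since `H` acts trivially on this lattice and is a maximal subgroup, a submodule fixed by one
`c ∉ H` is fixed by all of `K`, hence is `0` or `V`. Fix a simple `W ≤ V|_H`.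

If `c • W ≅ W` for some `c ∉ H`, choose an eigenvector `f` of the `F`-linear operator
`f ↦ ρ(c) ∘ f ∘ ρ(c)⁻¹ ∘ (c • W ≅ W)⁻¹` on the finite-dimensional space `Hom_H(W, V)`. Its image
is fixed by `c`, so `f : W → V|_H` is onto, and injective by Schur: `V|_H ≅ W` is simple.

Otherwise take `g ∉ H`. The conjugates `gⁱ • W`, `0 ≤ i < p`, are pairwise non-isomorphic, since
`gʲ • W = gʲ⁻ⁱ • (gⁱ • W)` with `gʲ⁻ⁱ ∉ H`, hence independent; and they span `V`, because every
element of `K` is some `gⁱ h` with `h ∈ H`, so their sum contains the `K`-stable sum of all `k • W`.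
-/

open Module

def Representation.IsIrreducible' {k G V : Type*} [CommRing k] [Monoid G]
    [AddCommGroup V] [Module k V] (ρ : Representation k G V) : Prop :=
  IsSimpleModule (MonoidAlgebra k G) ρ.asModule

open scoped MonoidAlgebra

namespace MonoidAlgebra

variable (F : Type*) [Field F] {K : Type*} [Group K] (H : Subgroup K) [H.Normal]

noncomputable def conjNormal (k : K) : F[H] →+* F[H] :=
  mapDomainRingHom F (MulAut.conjNormal (H := H) k).toMonoidHom

variable {F H}

lemma conjNormal_mul (k l : K) :
    conjNormal F H (k * l) = (conjNormal F H k).comp (conjNormal F H l) := by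
  rw [conjNormal, map_mul, conjNormal, conjNormal, ← mapDomainRingHom_comp]
  rfl

lemma conjNormal_one : conjNormal F H (1 : K) = RingHom.id _ := by
  rw [conjNormal, map_one]
  exact mapDomainRingHom_id

@[simp]
lemma conjNormal_single (k : K) (h : H) (t : F) :
    conjNormal F H k (single h t) = single (MulAut.conjNormal k h) t := by
  simp [conjNormal]

instance (k : K) :
    RingHomCompTriple (conjNormal F H k⁻¹) (conjNormal F H k) (RingHom.id _) :=
  ⟨by rw [← conjNormal_mul, mul_inv_cancel, conjNormal_one]⟩

instance (k : K) : RingHomSurjective (conjNormal F H k) :=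
  ⟨fun b => ⟨conjNormal F H k⁻¹ b, by
    rw [← RingHom.comp_apply, ← conjNormal_mul, mul_inv_cancel, conjNormal_one]; rfl⟩⟩

end MonoidAlgebra

namespace Subgroup

variable {G : Type*} [Group G] {H : Subgroup G}

lemma isCoatom_of_index_prime (hH : H.index.Prime) : IsCoatom H := by
  refine ⟨fun h => hH.ne_one (index_eq_one.mpr h), fun P hP => ?_⟩
  rcases Nat.prime_mul_iff.mp (relIndex_mul_index hP.le ▸ hH) with ⟨-, h⟩ | ⟨-, h⟩
  · exact index_eq_one.mp h
  · exact absurd (relIndex_eq_one.mp h) hP.not_ge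

variable [H.Normal]

lemma orderOf_mk_eq_index (hH : H.index.Prime) {g : G} (hg : g ∉ H) :
    orderOf (g : G ⧸ H) = H.index :=
  have := Fact.mk hH
  orderOf_eq_prime pow_card_eq_one' (by rwa [Ne, QuotientGroup.eq_one_iff])

lemma pow_notMem_of_lt_index (hH : H.index.Prime) {g : G} (hg : g ∉ H) {n : ℕ} (hn0 : n ≠ 0)
    (hn : n < H.index) : g ^ n ∉ H := by
  rw [← QuotientGroup.eq_one_iff, QuotientGroup.mk_pow]
  exact pow_ne_one_of_lt_orderOf hn0 (orderOf_mk_eq_index hH hg ▸ hn)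

lemma exists_pow_inv_mul_mem (hH : H.index.Prime) {g : G} (hg : g ∉ H) (k : G) :
    ∃ n < H.index, (g ^ n)⁻¹ * k ∈ H := by
  have := Fact.mk hH
  have hk : (k : G ⧸ H) ∈ zpowers (g : G ⧸ H) := by
    rw [zpowers_eq_top_of_prime_card (p := H.index) rfl (by rwa [Ne, QuotientGroup.eq_one_iff])]
    exact mem_top _
  have hfin : IsOfFinOrder (g : G ⧸ H) :=
    orderOf_pos_iff.mp (orderOf_mk_eq_index hH hg ▸ hH.pos)
  obtain ⟨n, hn⟩ := hfin.mem_powers_iff_mem_zpowers.mpr hk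
  refine ⟨n % H.index, Nat.mod_lt _ hH.pos, ?_⟩
  rw [← QuotientGroup.eq, QuotientGroup.mk_pow, ← orderOf_mk_eq_index hH hg, pow_mod_orderOf]
  exact hn

end Subgroup

theorem iSupIndep_of_isEmpty_linearEquiv {ι R M : Type*} [Ring R] [AddCommGroup M]
    [Module R M] {N : ι → Submodule R M} [∀ i, IsSimpleModule R (N i)]
    (h : ∀ i j, i ≠ j → IsEmpty (N i ≃ₗ[R] N j)) : iSupIndep N := by
  intro i
  rw [disjoint_iff]
  by_contra hne
  have hle : N i ≤ ⨆ j ≠ i, N j :=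
    ((isSimpleModule_iff_isAtom.mp inferInstance).le_iff_eq hne).mp inf_le_left ▸ inf_le_right
  have (m : N '' {j | j ≠ i}) : IsSimpleModule R m := by
    obtain ⟨_, j, -, rfl⟩ := m
    infer_instance
  obtain ⟨_, ⟨j, hj, rfl⟩, ⟨e⟩⟩ := (N i).linearEquiv_of_le_sSup _ (by rwa [sSup_image])
  exact (h i j (Ne.symm hj)).false e

namespace Representation

variable {F K V : Type*} [Field F] [Group K] [AddCommGroup V] [Module F V]

section SemilinearAction

variable (ρ : Representation F K V) (H : Subgroup K) [H.Normal]

abbrev res : Representation F H V := ρ.comp H.subtype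

noncomputable def resSemilinearMap (k : K) :
    (ρ.res H).asModule →ₛₗ[MonoidAlgebra.conjNormal F H k] (ρ.res H).asModule where
  toFun v := (ρ.res H).asModuleEquiv.symm (ρ k ((ρ.res H).asModuleEquiv v))
  map_add' := by simp
  map_smul' b v := by
    induction b using MonoidAlgebra.induction_linear with
    | zero => simp
    | add x y hx hy => simp only [add_smul, map_add, hx, hy]
    | single h t =>
      apply (ρ.res H).asModuleEquiv.injective
      simp only [single_smul, MonoidHom.coe_comp, Subgroup.coe_subtype, Function.comp_apply,
        LinearEquiv.apply_symm_apply, MonoidAlgebra.conjNormal_single, MulAut.conjNormal_apply]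
      change ρ k (t • ρ h _) = t • ρ (k * h * k⁻¹) (ρ k _)
      simp only [map_smul, ← Module.End.mul_apply, ← map_mul, inv_mul_cancel_right]

variable {ρ H}

lemma resSemilinearMap_mul (k l : K) (v : (ρ.res H).asModule) :
    ρ.resSemilinearMap H (k * l) v = ρ.resSemilinearMap H k (ρ.resSemilinearMap H l v) := by
  simp [resSemilinearMap]

lemma resSemilinearMap_one (v : (ρ.res H).asModule) : ρ.resSemilinearMap H 1 v = v := by
  simp [resSemilinearMap]

@[simp]
lemma resSemilinearMap_inv_apply_apply (k : K) (v : (ρ.res H).asModule) :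
    ρ.resSemilinearMap H k⁻¹ (ρ.resSemilinearMap H k v) = v := by
  rw [← resSemilinearMap_mul, inv_mul_cancel, resSemilinearMap_one]

@[simp]
lemma resSemilinearMap_apply_inv_apply (k : K) (v : (ρ.res H).asModule) :
    ρ.resSemilinearMap H k (ρ.resSemilinearMap H k⁻¹ v) = v := by
  rw [← resSemilinearMap_mul, mul_inv_cancel, resSemilinearMap_one]

lemma bijective_resSemilinearMap (k : K) : Function.Bijective (ρ.resSemilinearMap H k) :=
  Function.bijective_iff_has_inverse.mpr ⟨ρ.resSemilinearMap H k⁻¹,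
    resSemilinearMap_inv_apply_apply k, resSemilinearMap_apply_inv_apply k⟩

lemma resSemilinearMap_of_mem {h : K} (hh : h ∈ H) (v : (ρ.res H).asModule) :
    ρ.resSemilinearMap H h v = MonoidAlgebra.of F H ⟨h, hh⟩ • v :=
  (asModuleEquiv_symm_map_rho (ρ.res H) ⟨h, hh⟩ _).trans (by rw [LinearEquiv.symm_apply_apply])

noncomputable instance : SMul K (Submodule F[H] (ρ.res H).asModule) :=
  ⟨fun k U => U.map (ρ.resSemilinearMap H k)⟩

lemma smul_submodule_def (k : K) (U : Submodule F[H] (ρ.res H).asModule) :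
    k • U = U.map (ρ.resSemilinearMap H k) := rfl

noncomputable instance : MulAction K (Submodule F[H] (ρ.res H).asModule) where
  one_smul U := by ext; simp [smul_submodule_def, resSemilinearMap_one]
  mul_smul k l U := by ext; simp [smul_submodule_def, resSemilinearMap_mul]

noncomputable def smulSubmoduleOrderIso (k : K) :
    Submodule F[H] (ρ.res H).asModule ≃o Submodule F[H] (ρ.res H).asModule :=
  Submodule.orderIsoMapComapOfBijective _ (bijective_resSemilinearMap k)

lemma isAtom_smul_submodule_iff (k : K) (U : Submodule F[H] (ρ.res H).asModule) :
    IsAtom (k • U) ↔ IsAtom U :=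
  (smulSubmoduleOrderIso k).isAtom_iff U

lemma smul_submodule_eq_bot_iff (k : K) (U : Submodule F[H] (ρ.res H).asModule) :
    k • U = ⊥ ↔ U = ⊥ :=
  (smulSubmoduleOrderIso k).injective.eq_iff' (smulSubmoduleOrderIso k).map_bot

lemma smul_iSup_submodule {ι : Sort*} (k : K) (U : ι → Submodule F[H] (ρ.res H).asModule) :
    k • ⨆ i, U i = ⨆ i, k • U i :=
  Submodule.map_iSup _ _

lemma smul_submodule_of_mem {h : K} (hh : h ∈ H) (U : Submodule F[H] (ρ.res H).asModule) :
    h • U = U := by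
  have key : ∀ {h : K}, h ∈ H → h • U ≤ U := by
    rintro h hh _ ⟨v, hv, rfl⟩
    rw [resSemilinearMap_of_mem hh]
    exact U.smul_mem _ hv
  refine le_antisymm (key hh) ?_
  calc U = h • h⁻¹ • U := (smul_inv_smul h U).symm
    _ ≤ h • U := Submodule.map_mono (key (H.inv_mem hh))

end SemilinearAction

variable {ρ : Representation F K V} {H : Subgroup K} [H.Normal]

lemma eq_bot_or_eq_top_of_forall_smul_eq [IsSimpleModule F[K] ρ.asModule]
    {U : Submodule F[H] (ρ.res H).asModule} (hU : ∀ k : K, k • U = U) : U = ⊥ ∨ U = ⊤ := by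
  let U' : Submodule F[K] ρ.asModule :=
    { carrier := {v | (ρ.res H).asModuleEquiv.symm (ρ.asModuleEquiv v) ∈ U}
      add_mem' := fun ha hb => by
        simp only [Set.mem_ofPred_eq, map_add]
        exact U.add_mem ha hb
      zero_mem' := by simp
      smul_mem' := fun b v hv => by
        induction b using MonoidAlgebra.induction_linear with
        | zero => simp
        | add x y hx hy =>
          simp only [Set.mem_ofPred_eq, add_smul, map_add] at hx hy ⊢
          exact U.add_mem hx hy
        | single k t =>
          have hk : ρ.resSemilinearMap H k
              ((ρ.res H).asModuleEquiv.symm (ρ.asModuleEquiv v)) ∈ U := by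
            rw [← hU k]
            exact Submodule.mem_map_of_mem hv
          simp only [resSemilinearMap, LinearMap.coe_mk, AddHom.coe_mk,
            LinearEquiv.apply_symm_apply] at hk
          show (ρ.res H).asModuleEquiv.symm (ρ.asModuleEquiv (MonoidAlgebra.single k t • v)) ∈ U
          rw [asModuleEquiv_map_smul, asAlgebraHom_single, LinearMap.smul_apply, map_smul]
          exact U.smul_of_tower_mem t hk }
  have hmem (u : (ρ.res H).asModule) :
      u ∈ U ↔ ρ.asModuleEquiv.symm ((ρ.res H).asModuleEquiv u) ∈ U' := by
    simp [U']
  refine (eq_bot_or_eq_top U').imp (fun h => ?_) (fun h => ?_)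
  · refine (Submodule.eq_bot_iff U).mpr fun u hu => ?_
    simpa [h] using (hmem u).mp hu
  · exact Submodule.eq_top_iff'.mpr fun u => (hmem u).mpr (h ▸ Submodule.mem_top)

lemma eq_bot_or_eq_top_of_smul_eq [IsSimpleModule F[K] ρ.asModule] (hH : H.index.Prime)
    {c : K} (hc : c ∉ H) {U : Submodule F[H] (ρ.res H).asModule} (hU : c • U = U) :
    U = ⊥ ∨ U = ⊤ := by
  have hle : H ≤ MulAction.stabilizer K U := fun h hh => smul_submodule_of_mem hh U
  have htop : MulAction.stabilizer K U = ⊤ :=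
    (Subgroup.isCoatom_of_index_prime hH).2 _ (lt_of_le_of_ne hle fun h => hc (h ▸ hU))
  exact eq_bot_or_eq_top_of_forall_smul_eq ((Subgroup.eq_top_iff' _).mp htop)

section Twist

variable {c : K} {W : Submodule F[H] (ρ.res H).asModule}

variable (ρ) in
noncomputable def smulSubmoduleInv (c : K) (W : Submodule F[H] (ρ.res H).asModule) :
    ↥(c • W) →ₛₗ[MonoidAlgebra.conjNormal F H c⁻¹] ↥W :=
  (ρ.resSemilinearMap H c⁻¹).restrict fun _ ⟨w, hw, hv⟩ => by
    rwa [← hv, resSemilinearMap_inv_apply_apply]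

lemma range_smulSubmoduleInv : LinearMap.range (ρ.smulSubmoduleInv c W) = ⊤ :=
  LinearMap.range_eq_top.mpr fun w =>
    ⟨⟨_, Submodule.mem_map_of_mem w.2⟩, Subtype.ext <| by
      simp [smulSubmoduleInv, LinearMap.restrict_apply]⟩

noncomputable def twistEnd (e : ↥(c • W) ≃ₗ[F[H]] ↥W) :
    Module.End F (↥W →ₗ[F[H]] (ρ.res H).asModule) where
  toFun f := (ρ.resSemilinearMap H c).comp
    (f.comp ((ρ.smulSubmoduleInv c W).comp e.symm.toLinearMap))
  map_add' f g := by ext; simp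
  map_smul' r f := by ext; simp [resSemilinearMap]

lemma range_twistEnd (e : ↥(c • W) ≃ₗ[F[H]] ↥W) (f : ↥W →ₗ[F[H]] (ρ.res H).asModule) :
    LinearMap.range (twistEnd e f) = c • LinearMap.range f := by
  rw [twistEnd, LinearMap.coe_mk, AddHom.coe_mk, LinearMap.range_comp,
    LinearMap.range_comp_of_range_eq_top]
  · rfl
  · rw [LinearMap.range_comp_of_range_eq_top _ e.symm.range, range_smulSubmoduleInv]

lemma exists_ne_zero_smul_range_eq [IsAlgClosed F] [FiniteDimensional F V]
    [IsSimpleModule F[H] W] (e : ↥(c • W) ≃ₗ[F[H]] ↥W) :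
    ∃ f : ↥W →ₗ[F[H]] (ρ.res H).asModule, f ≠ 0 ∧ c • LinearMap.range f = LinearMap.range f := by
  have : FiniteDimensional F W :=
    .of_injective (W.subtype.restrictScalars F) Subtype.val_injective
  have : FiniteDimensional F (↥W →ₗ[F[H]] (ρ.res H).asModule) :=
    .of_injective (LinearMap.restrictScalarsₗ F F[H] W _ F) (LinearMap.restrictScalars_injective F)
  have : Nontrivial (↥W →ₗ[F[H]] (ρ.res H).asModule) := by
    have := IsSimpleModule.nontrivial F[H] W
    obtain ⟨w, hw⟩ := exists_ne (0 : W)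
    exact nontrivial_of_ne W.subtype 0 fun h => hw (Subtype.ext (LinearMap.congr_fun h w))
  obtain ⟨μ, hμ⟩ := Module.End.exists_eigenvalue (twistEnd e)
  obtain ⟨f, hf⟩ := hμ.exists_hasEigenvector
  have hrange : LinearMap.range (μ • f) = c • LinearMap.range f :=
    hf.apply_eq_smul ▸ range_twistEnd e f
  have hμ0 : μ ≠ 0 := by
    rintro rfl
    rw [zero_smul, LinearMap.range_zero, eq_comm, smul_submodule_eq_bot_iff,
      LinearMap.range_eq_bot] at hrange
    exact hf.right hrange
  have hle (r : F) (g : ↥W →ₗ[F[H]] (ρ.res H).asModule) :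
      LinearMap.range (r • g) ≤ LinearMap.range g := by
    rintro _ ⟨w, rfl⟩
    exact ⟨r • w, g.map_smul_of_tower r w⟩
  refine ⟨f, hf.right, hrange ▸ le_antisymm (hle μ f) ?_⟩
  simpa [smul_smul, inv_mul_cancel₀ hμ0] using hle μ⁻¹ (μ • f)

end Twist

lemma isSimpleModule_res_of_linearEquiv_smul [IsAlgClosed F] [FiniteDimensional F V]
    [IsSimpleModule F[K] ρ.asModule] (hH : H.index.Prime) {c : K} (hc : c ∉ H)
    {W : Submodule F[H] (ρ.res H).asModule} [IsSimpleModule F[H] W]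
    (e : ↥(c • W) ≃ₗ[F[H]] ↥W) : IsSimpleModule F[H] (ρ.res H).asModule := by
  obtain ⟨f, hf, hstable⟩ := exists_ne_zero_smul_range_eq e
  have hsurj : LinearMap.range f = ⊤ :=
    (eq_bot_or_eq_top_of_smul_eq hH hc hstable).resolve_left (LinearMap.range_eq_bot.not.mpr hf)
  have hinj := (LinearMap.injective_or_eq_zero f).resolve_right hf
  exact .congr (LinearEquiv.ofBijective f ⟨hinj, LinearMap.range_eq_top.mp hsurj⟩).symm

lemma iSup_pow_smul_eq_top [IsSimpleModule F[K] ρ.asModule] (hH : H.index.Prime) {g : K}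
    (hg : g ∉ H) {W : Submodule F[H] (ρ.res H).asModule} (hW : W ≠ ⊥) :
    ⨆ i : Fin H.index, g ^ (i : ℕ) • W = ⊤ := by
  have hall : ⨆ k : K, k • W = ⊤ := by
    refine (eq_bot_or_eq_top_of_forall_smul_eq fun l => ?_).resolve_left ?_
    · rw [smul_iSup_submodule]
      exact (Equiv.mulLeft l).iSup_congr fun k => (smul_smul l k W).symm
    · exact ne_bot_of_le_ne_bot hW (le_iSup_of_le 1 (one_smul K W).ge)
  refine eq_top_iff.mpr (hall ▸ iSup_le fun k => ?_)
  obtain ⟨n, hn, hk⟩ := Subgroup.exists_pow_inv_mul_mem hH hg k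
  calc k • W = g ^ n • ((g ^ n)⁻¹ * k) • W := by rw [smul_smul, mul_inv_cancel_left]
    _ = g ^ n • W := by rw [smul_submodule_of_mem hk]
    _ ≤ _ := le_iSup (fun i : Fin H.index => g ^ (i : ℕ) • W) ⟨n, hn⟩

lemma exists_isInternal_of_isEmpty_linearEquiv_smul [FiniteDimensional F V]
    [IsSimpleModule F[K] ρ.asModule] (hH : H.index.Prime)
    (hnoniso : ∀ c ∉ H, ∀ W : Submodule F[H] (ρ.res H).asModule, IsSimpleModule F[H] W →
      IsEmpty (↥(c • W) ≃ₗ[F[H]] ↥W)) :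
    ∃ W : Fin H.index → Submodule F[H] (ρ.res H).asModule, DirectSum.IsInternal W ∧
      (∀ i, IsSimpleModule F[H] (W i)) ∧ ∀ i j, i ≠ j → IsEmpty (W i ≃ₗ[F[H]] W j) := by
  have : Nontrivial (ρ.res H).asModule := IsSimpleModule.nontrivial F[K] ρ.asModule
  have : IsArtinian F[H] (ρ.res H).asModule := isArtinian_of_tower F inferInstance
  obtain ⟨W₀, hW₀⟩ := IsAtomic.exists_atom (Submodule F[H] (ρ.res H).asModule)
  obtain ⟨g, hg⟩ := SetLike.exists_not_mem_of_ne_top H (Subgroup.isCoatom_of_index_prime hH).1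
  let ψ (i : Fin H.index) := g ^ (i : ℕ) • W₀
  have hψ (i : Fin H.index) : IsSimpleModule F[H] (ψ i) :=
    isSimpleModule_iff_isAtom.mpr ((isAtom_smul_submodule_iff _ _).mpr hW₀)
  have hlt {i j : Fin H.index} (hij : i < j) : IsEmpty (ψ i ≃ₗ[F[H]] ψ j) := by
    have hji : ψ j = g ^ ((j : ℕ) - i) • ψ i := by
      rw [smul_smul, ← pow_add, Nat.sub_add_cancel hij.le]
    exact ⟨fun e => (hnoniso _ (Subgroup.pow_notMem_of_lt_index hH hg (by omega) (by omega)) _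
      (hψ i)).false (hji ▸ e.symm)⟩
  have hne (i j : Fin H.index) (hij : i ≠ j) : IsEmpty (ψ i ≃ₗ[F[H]] ψ j) :=
    hij.lt_or_gt.elim hlt fun h => ⟨fun e => (hlt h).false e.symm⟩
  exact ⟨ψ, DirectSum.isInternal_submodule_of_iSupIndep_of_iSup_eq_top
    (iSupIndep_of_isEmpty_linearEquiv hne) (iSup_pow_smul_eq_top hH hg hW₀.1), hψ, hne⟩

end Representation

theorem restriction_irreducible_or_direct_sum_of_prime_index_general
    (F : Type) [Field F] [IsAlgClosed F] (K : Type) [Group K]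
    (H : Subgroup K) [H.Normal] (p : ℕ) (hp : p.Prime) (hindex : H.index = p)
    (V : Type) [AddCommGroup V] [Module F V] [FiniteDimensional F V]
    (ρ : Representation F K V) (hρ : ρ.IsIrreducible') :
    Representation.IsIrreducible' (ρ.comp H.subtype : Representation F H V) ∨
    ∃ (W : Fin p → Submodule (MonoidAlgebra F H)
        (Representation.asModule (ρ.comp H.subtype : Representation F H V))),
      DirectSum.IsInternal W ∧
      (∀ i, IsSimpleModule (MonoidAlgebra F H) (W i)) ∧
      (∀ i j, i ≠ j → IsEmpty ((W i) ≃ₗ[MonoidAlgebra F H] (W j))) := by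
  subst hindex
  have : IsSimpleModule F[K] ρ.asModule := hρ
  by_cases hiso : ∃ c ∉ H, ∃ W : Submodule F[H] (ρ.res H).asModule,
      IsSimpleModule F[H] W ∧ Nonempty (↥(c • W) ≃ₗ[F[H]] ↥W)
  · obtain ⟨c, hc, W, _, ⟨e⟩⟩ := hiso
    exact Or.inl (Representation.isSimpleModule_res_of_linearEquiv_smul hp hc e)
  · simp only [not_exists, not_and, not_nonempty_iff] at hiso
    exact Or.inr (Representation.exists_isInternal_of_isEmpty_linearEquiv_smul hp hiso)

/-- If `H ⊴ K` has prime index `p` and `V` is an irreducible `F`-representation of `K`, then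
the restriction `V|_H` is either irreducible, or is the direct sum of `p` pairwise
non-isomorphic irreducible `F`-representations of `H`. -/
theorem restriction_irreducible_or_direct_sum_of_prime_index
    (F : Type) [Field F] [IsAlgClosed F] (K : Type) [Group K] [Fintype K]
    (H : Subgroup K) [H.Normal] (p : ℕ) (hp : p.Prime) (hindex : H.index = p)
    (V : Type) [AddCommGroup V] [Module F V] [FiniteDimensional F V]
    (ρ : Representation F K V) (hρ : ρ.IsIrreducible') :
    Representation.IsIrreducible' (ρ.comp H.subtype : Representation F H V) ∨
    ∃ (W : Fin p → Submodule (MonoidAlgebra F H)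
        (Representation.asModule (ρ.comp H.subtype : Representation F H V))),
      DirectSum.IsInternal W ∧
      (∀ i, IsSimpleModule (MonoidAlgebra F H) (W i)) ∧
      (∀ i j, i ≠ j → IsEmpty ((W i) ≃ₗ[MonoidAlgebra F H] (W j))) :=
  restriction_irreducible_or_direct_sum_of_prime_index_general F K H p hp hindex V ρ hρ
end

section
/- Let m ≥ 1, let q = 2^m, let F_q be the finite field with q elements, and let G = SL₂(F_q) be the group of 2×2 matrices over F_q of determinant 1. Suppose H is a subgroup of G that contains a Sylow 2-subgroup of G and whose order divides q(q−1). Then H is contained in a Borel subgroup of G, i.e., there exists g ∈ G such that g H g⁻¹ is contained in the subgroup of upper triangular matrices of SL₂(F_q). -/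
/-!
In characteristic `p` the unipotent matrices `u a = !![1, a; 0, 1]` form a `p`-group, so they lie
in a Sylow `p`-subgroup; as all Sylow subgroups are conjugate, some conjugate `K` of `H` contains
every `u a`. If `K` also contained an `h` with nonzero lower-left entry, the products
`u a * h * u b` would be `q²` distinct elements of `K`, none of them unipotent, so
`|K| ≥ q² + q > q(q - 1)`.
-/

open Matrix

def upperTriangularSL2 (F : Type*) [CommRing F] :
    Subgroup (Matrix.SpecialLinearGroup (Fin 2) F) where
  carrier := {A | (A : Matrix (Fin 2) (Fin 2) F) 1 0 = 0}
  one_mem' := by simp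
  mul_mem' := by
    intro A B hA hB
    simp only [Set.mem_setOf_eq] at *
    show (A.1 * B.1) 1 0 = 0
    rw [Matrix.mul_apply, Fin.sum_univ_two, hA, hB]
    ring
  inv_mem' := by
    intro A hA
    simp only [Set.mem_setOf_eq] at *
    rw [Matrix.SpecialLinearGroup.SL2_inv_expl]
    simp [hA]

open Pointwise

theorem IsPGroup.exists_le_conj_smul_of_sylow_le {G : Type*} [Group G] [Finite G] {p : ℕ}
    [Fact p.Prime] {U H : Subgroup G} (hU : IsPGroup p U) (P : Sylow p G) (hP : ↑P ≤ H) :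
    ∃ g : G, U ≤ MulAut.conj g • H := by
  obtain ⟨Q, hUQ⟩ := hU.exists_le_sylow
  obtain ⟨g, rfl⟩ := MulAction.exists_smul_eq G P Q
  exact ⟨g, hUQ.trans (Subgroup.pointwise_smul_le_pointwise_smul_iff.mpr hP)⟩

namespace Matrix.SpecialLinearGroup

section CommRing

variable {R : Type*} [CommRing R]

def upperRightHom : AddChar R (SpecialLinearGroup (Fin 2) R) where
  toFun x := ⟨!![1, x; 0, 1], by simp [det_fin_two_of]⟩
  map_zero_eq_one' := Subtype.ext (one_fin_two (α := R)).symm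
  map_add_eq_mul' a b := Subtype.ext <| by
    change !![1, a + b; 0, 1] = !![1, a; 0, 1] * !![1, b; 0, 1]
    simp [add_comm]

@[simp]
lemma coe_upperRightHom (a : R) :
    (upperRightHom a : Matrix (Fin 2) (Fin 2) R) = !![1, a; 0, 1] :=
  rfl

lemma injective_upperRightHom : Function.Injective (upperRightHom (R := R)) := fun a b h => by
  simpa using congr_arg (fun A : SpecialLinearGroup (Fin 2) R => A 0 1) h

variable (R) in
def upperUnitriangular : Subgroup (SpecialLinearGroup (Fin 2) R) :=
  (upperRightHom (R := R)).toMonoidHom.range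

lemma upperRightHom_mem_upperUnitriangular (a : R) : upperRightHom a ∈ upperUnitriangular R :=
  ⟨Multiplicative.ofAdd a, rfl⟩

lemma isPGroup_upperUnitriangular (p : ℕ) [CharP R p] : IsPGroup p (upperUnitriangular R) := by
  rintro ⟨_, a, rfl⟩
  refine ⟨1, Subtype.ext ?_⟩
  change upperRightHom a.toAdd ^ p ^ 1 = 1
  rw [pow_one, ← AddChar.map_nsmul_eq_pow, nsmul_eq_mul, CharP.cast_eq_zero, zero_mul,
    AddChar.map_zero_eq_one]

lemma coe_upperRightHom_mul_mul_upperRightHom (a b : R) (h : SpecialLinearGroup (Fin 2) R) :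
    ((upperRightHom a * h * upperRightHom b : SpecialLinearGroup (Fin 2) R) :
      Matrix (Fin 2) (Fin 2) R) =
      !![h 0 0 + a * h 1 0, (h 0 0 + a * h 1 0) * b + (h 0 1 + a * h 1 1);
         h 1 0, h 1 0 * b + h 1 1] := by
  ext i j
  fin_cases i <;> fin_cases j <;> simp [mul_apply, vecMul, dotProduct, Fin.sum_univ_two]

end CommRing

variable {F : Type*} [Field F]

lemma injective_upperRightHom_mul_mul_upperRightHom {h : SpecialLinearGroup (Fin 2) F}
    (hc : h 1 0 ≠ 0) :
    Function.Injective fun ab : F × F => upperRightHom ab.1 * h * upperRightHom ab.2 := by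
  rintro ⟨a, b⟩ ⟨a', b'⟩ hab
  have hM := congr_arg (fun A : SpecialLinearGroup (Fin 2) F => (A : Matrix (Fin 2) (Fin 2) F)) hab
  simp only [coe_upperRightHom_mul_mul_upperRightHom] at hM
  have h00 := congr_fun₂ hM 0 0
  have h11 := congr_fun₂ hM 1 1
  simp only [of_apply, cons_val', cons_val_zero, cons_val_one, empty_val', cons_val_fin_one,
    add_right_inj, add_left_inj, mul_eq_mul_right_iff, mul_eq_mul_left_iff, hc, or_false] at h00 h11
  rw [h00, h11]

lemma upperRightHom_mul_mul_upperRightHom_ne_upperRightHom {h : SpecialLinearGroup (Fin 2) F}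
    (hc : h 1 0 ≠ 0) (a b c : F) : upperRightHom a * h * upperRightHom b ≠ upperRightHom c := by
  intro habc
  have h10 := congr_arg (fun A : SpecialLinearGroup (Fin 2) F => A 1 0) habc
  rw [coe_upperRightHom_mul_mul_upperRightHom, coe_upperRightHom] at h10
  exact hc h10

lemma le_upperTriangularSL2_of_card_lt [Finite F] {K : Subgroup (SpecialLinearGroup (Fin 2) F)}
    (hU : upperUnitriangular F ≤ K) (hK : Nat.card K < Nat.card F * Nat.card F + Nat.card F) :
    K ≤ upperTriangularSL2 F := by
  by_contra hKB
  obtain ⟨h, hhK, hhB⟩ := Set.not_subset.mp hKB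
  have hc : h 1 0 ≠ 0 := hhB
  let φ : F × F ⊕ F → SpecialLinearGroup (Fin 2) F :=
    Sum.elim (fun ab => upperRightHom ab.1 * h * upperRightHom ab.2) upperRightHom
  have hφ : Function.Injective φ :=
    (injective_upperRightHom_mul_mul_upperRightHom hc).sumElim injective_upperRightHom
      fun ab c => upperRightHom_mul_mul_upperRightHom_ne_upperRightHom hc ab.1 ab.2 c
  have hφK : ∀ x, φ x ∈ K := by
    rintro (⟨a, b⟩ | a)
    · exact K.mul_mem (K.mul_mem (hU (upperRightHom_mem_upperUnitriangular a)) hhK)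
        (hU (upperRightHom_mem_upperUnitriangular b))
    · exact hU (upperRightHom_mem_upperUnitriangular a)
  have hcard := Nat.card_le_card_of_injective (fun x => (⟨φ x, hφK x⟩ : K))
    fun x y hxy => hφ (congr_arg Subtype.val hxy)
  rw [Nat.card_sum, Nat.card_prod] at hcard
  omega

end Matrix.SpecialLinearGroup

open Matrix.SpecialLinearGroup in
/-- A subgroup of `SL₂(𝔽_q)`, `q = 2^m`, containing a Sylow `2`-subgroup and of order dividing
`q(q-1)` is contained in a Borel subgroup, i.e. some conjugate of it consists of upper
triangular matrices. -/
theorem subgroup_of_SL2_char_two_conjugate_into_borel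
    (m : ℕ) (hm : 1 ≤ m) (q : ℕ) (hq : q = 2 ^ m)
    (H : Subgroup (Matrix.SpecialLinearGroup (Fin 2) (GaloisField 2 m)))
    (hSyl : ∃ P : Sylow 2 (Matrix.SpecialLinearGroup (Fin 2) (GaloisField 2 m)),
      (P : Subgroup (Matrix.SpecialLinearGroup (Fin 2) (GaloisField 2 m))) ≤ H)
    (hord : Nat.card H ∣ q * (q - 1)) :
    ∃ g : Matrix.SpecialLinearGroup (Fin 2) (GaloisField 2 m),
      ∀ h ∈ H, g * h * g⁻¹ ∈ upperTriangularSL2 (GaloisField 2 m) := by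
  have : Fact (Nat.Prime 2) := ⟨Nat.prime_two⟩
  have hF : Nat.card (GaloisField 2 m) = q := hq ▸ GaloisField.card 2 m (by omega)
  have hq2 : 2 ≤ q := hq ▸ Nat.le_self_pow (by omega) 2
  obtain ⟨P, hP⟩ := hSyl
  obtain ⟨g, hg⟩ :=
    (isPGroup_upperUnitriangular (R := GaloisField 2 m) 2).exists_le_conj_smul_of_sylow_le P hP
  have hcard : Nat.card ↥(MulAut.conj g • H) < q * q + q := calc
    Nat.card ↥(MulAut.conj g • H) = Nat.card H := Nat.card_congr (H.equivSMul _).toEquiv.symm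
    _ ≤ q * (q - 1) := Nat.le_of_dvd (Nat.mul_pos (by omega) (by omega)) hord
    _ < q * q + q := by nlinarith [Nat.sub_le q 1]
  have hB := le_upperTriangularSL2_of_card_lt hg (hF ▸ hcard)
  exact ⟨g, fun h hh => hB (Subgroup.smul_mem_pointwise_smul h _ H hh)⟩
end

section
/- The group PSL₂(F₂₅), the quotient of SL₂(F₂₅) by its center, has exactly one conjugacy class consisting of elements of order 3. -/
/-! An element of order `3` in `PSL₂(F)` lifts to `A ∈ SL₂(F)` with `A ^ 3 = 1`, `A ≠ 1`:
the centre is `{±1}` and `3` is odd, so one of the two lifts works. By Cayley–Hamilton,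
`A ^ 3 = (t² - 1) A - t` with `t = tr A`, which forces `t = -1` once `3 ≠ 0`; so `A` has
characteristic polynomial `X² + X + 1`. If this polynomial has a root `ω` (as it does in `𝔽₂₅`,
since `3 ∣ 24`), its roots are distinct and `A` is diagonalised to `diag(ω, ω⁻¹)` by an
eigenbasis that can be scaled to determinant `1`, so all such elements are conjugate already in
`SL₂(F)`. -/

instance : Fact (Nat.Prime 5) := ⟨by norm_num⟩

open Matrix MatrixGroups

theorem FiniteField.exists_sq_add_self_add_one_eq_zero {K : Type*} [Field K] [Finite K]
    (h : 3 ∣ Nat.card K - 1) : ∃ ω : K, ω ^ 2 + ω + 1 = 0 := by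
  obtain ⟨u, hu⟩ := exists_prime_orderOf_dvd_card' 3 (by rwa [Nat.card_units K])
  have hω : IsPrimitiveRoot (u : K) 3 := by
    rw [← hu, ← orderOf_units]
    exact IsPrimitiveRoot.orderOf _
  have := hω.geom_sum_eq_zero (by norm_num)
  rw [Finset.sum_range_succ, Finset.sum_range_succ, Finset.sum_range_one] at this
  exact ⟨u, by linear_combination this⟩

namespace Matrix.SpecialLinearGroup

variable {R : Type*} [CommRing R]

local notation:1024 "↑ₘ" A:1024 => ((A : SL(2, R)) : Matrix (Fin 2) (Fin 2) R)

theorem isConj_of_mul_eq_mul {n : Type*} [Fintype n] [DecidableEq n]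
    {A B : SpecialLinearGroup n R} (P : Matrix n n R) (hP : P.det = 1)
    (h : P * A = B * P) : IsConj A B :=
  isConj_iff.mpr ⟨⟨P, hP⟩, mul_inv_eq_iff_eq_mul.mpr (Subtype.ext h)⟩

theorem mem_center_iff_eq_one_or_eq_neg_one [IsDomain R] {A : SL(2, R)} :
    A ∈ Subgroup.center SL(2, R) ↔ A = 1 ∨ A = -1 := by
  rw [mem_center_iff, Fintype.card_fin]
  constructor
  · rintro ⟨r, hr, hA⟩
    rcases sq_eq_one_iff.mp hr with rfl | rfl
    · exact .inl (Subtype.ext (by simp [← hA]))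
    · exact .inr (Subtype.ext (by rw [coe_neg, coe_one, ← hA, map_neg, map_one]))
  · rintro (rfl | rfl)
    · exact ⟨1, one_pow _, by simp⟩
    · exact ⟨-1, by norm_num, by rw [coe_neg, coe_one, map_neg, map_one]⟩

theorem sq_eq_trace_smul_sub_one (A : SL(2, R)) : ↑ₘA ^ 2 = trace ↑ₘA • ↑ₘA - 1 := by
  nontriviality R
  have := aeval_self_charpoly ↑ₘA
  rw [charpoly_fin_two, det_coe] at this
  simp only [map_add, map_sub, map_mul, map_pow, Polynomial.aeval_X, Polynomial.aeval_C,
    map_one] at this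
  rwa [← Algebra.smul_def, sub_add, sub_eq_zero] at this

theorem pow_three_eq_trace_sq_sub_one_smul_sub (A : SL(2, R)) :
    ↑ₘA ^ 3 = (trace ↑ₘA ^ 2 - 1) • ↑ₘA - trace ↑ₘA • 1 := by
  rw [pow_succ, sq_eq_trace_smul_sub_one, sub_mul, smul_mul, ← sq, sq_eq_trace_smul_sub_one,
    one_mul]
  module

theorem pow_three_eq_one_and_ne_one_iff_trace_eq_neg_one [IsDomain R] (h3 : (3 : R) ≠ 0)
    (A : SL(2, R)) : A ^ 3 = 1 ∧ A ≠ 1 ↔ trace ↑ₘA = -1 := by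
  have hcube : A ^ 3 = 1 ↔ (trace ↑ₘA ^ 2 - 1) • ↑ₘA - trace ↑ₘA • 1 = 1 := by
    rw [← pow_three_eq_trace_sq_sub_one_smul_sub, ← coe_pow, ← coe_one, ext_iff, Matrix.ext_iff]
  rw [hcube]
  constructor
  · rintro ⟨h, hne⟩
    have htr := congrArg trace h
    simp only [trace_sub, trace_smul, trace_one, Fintype.card_fin, smul_eq_mul] at htr
    have : (trace ↑ₘA + 1) ^ 2 * (trace ↑ₘA - 2) = 0 := by linear_combination htr
    rcases mul_eq_zero.mp this with h1 | h2
    · linear_combination pow_eq_zero_iff (n := 2) two_ne_zero |>.mp h1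
    · refine absurd (Subtype.ext ?_) hne
      rw [sub_eq_zero.mp h2] at h
      have : (3 : R) • ↑ₘA = (3 : R) • 1 := by
        rw [← sub_eq_zero] at h ⊢
        rw [← h]
        module
      exact smul_right_injective _ h3 this
  · intro ht
    refine ⟨by rw [ht]; module, ?_⟩
    rintro rfl
    exact h3 (by linear_combination (by simp : trace ↑ₘ(1 : SL(2, R)) = 2).symm.trans ht)

def cubeRootDiagonal {ω : R} (hω : ω ^ 2 + ω + 1 = 0) : SL(2, R) :=
  ⟨!![ω, 0; 0, -1 - ω], by rw [det_fin_two_of]; linear_combination -hω⟩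

theorem trace_cubeRootDiagonal {ω : R} (hω : ω ^ 2 + ω + 1 = 0) :
    trace ↑ₘ(cubeRootDiagonal hω) = -1 := by
  simp [cubeRootDiagonal, trace_fin_two_of]

theorem isConj_cubeRootDiagonal {F : Type*} [Field F] {ω : F} (hω : ω ^ 2 + ω + 1 = 0)
    (h3 : (3 : F) ≠ 0) {A : SL(2, F)} (hA : trace (A : Matrix (Fin 2) (Fin 2) F) = -1) :
    IsConj (cubeRootDiagonal hω) A := by
  obtain ⟨p, q, r, s, hA_eq⟩ : ∃ p q r s, (A : Matrix (Fin 2) (Fin 2) F) = !![p, q; r, s] :=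
    ⟨_, _, _, _, eta_fin_two _⟩
  have hdet : p * s - q * r = 1 := by rw [← det_fin_two_of, ← hA_eq, det_coe]
  obtain rfl : s = -1 - p := by
    linear_combination (by rw [← trace_fin_two_of, ← hA_eq, hA] : p + s = -1)
  -- `(2ω + 1)² = -3`: the two roots `ω` and `-1 - ω` are distinct.
  have hω' : 2 * ω + 1 ≠ 0 := fun h ↦ h3 (by linear_combination 4 * hω - (2 * ω + 1) * h)
  have hD : (cubeRootDiagonal hω : Matrix (Fin 2) (Fin 2) F) = !![ω, 0; 0, -1 - ω] := rfl
  rcases eq_or_ne q 0 with rfl | hq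
  · obtain ⟨y, hy⟩ : ∃ y, y * (2 * ω + 1) = r := ⟨r / (2 * ω + 1), div_mul_cancel₀ r hω'⟩
    have : (p - ω) * (p - (-1 - ω)) = 0 := by linear_combination -hdet - hω
    rcases mul_eq_zero.mp this with hp | hp
    · obtain rfl : p = ω := by linear_combination hp
      refine isConj_of_mul_eq_mul !![1, 0; y, 1] (by simp [det_fin_two_of]) ?_
      rw [hD, hA_eq, mul_fin_two, mul_fin_two]
      simp only [EmbeddingLike.apply_eq_iff_eq, vecCons_inj, and_true]
      exact ⟨⟨by ring, by ring⟩, by linear_combination hy, by ring⟩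
    · obtain rfl : p = -1 - ω := by linear_combination hp
      refine isConj_of_mul_eq_mul !![0, -1; 1, y] (by simp [det_fin_two_of]) ?_
      rw [hD, hA_eq, mul_fin_two, mul_fin_two]
      simp only [EmbeddingLike.apply_eq_iff_eq, vecCons_inj, and_true]
      exact ⟨⟨by ring, by ring⟩, by ring, by linear_combination -hy⟩
  · -- The columns `(q, ω - p)` and `(q, -1 - ω - p)` are eigenvectors for `ω` and `-1 - ω`.
    obtain ⟨u, hu⟩ : ∃ u, u * (q * (-1 - 2 * ω)) = 1 :=
      ⟨_, inv_mul_cancel₀ (mul_ne_zero hq fun h ↦ hω' (by linear_combination -h))⟩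
    refine isConj_of_mul_eq_mul !![q, q * u; ω - p, (-1 - ω - p) * u]
      (by rw [det_fin_two_of]; linear_combination hu) ?_
    rw [hD, hA_eq, mul_fin_two, mul_fin_two]
    simp only [EmbeddingLike.apply_eq_iff_eq, vecCons_inj, and_true]
    exact ⟨⟨by ring, by ring⟩, by linear_combination hω + hdet,
      by linear_combination u * (hω + hdet)⟩

end Matrix.SpecialLinearGroup

open Matrix.SpecialLinearGroup

namespace Matrix.ProjectiveSpecialLinearGroup

variable {R : Type*} [CommRing R] [IsDomain R]

theorem exists_pow_eq_one_of_odd {k : ℕ} (hk : Odd k) {x : PSL(2, R)} (hx : x ^ k = 1) :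
    ∃ a : SL(2, R), a ^ k = 1 ∧ (a : PSL(2, R)) = x := by
  obtain ⟨a, rfl⟩ := QuotientGroup.mk_surjective x
  rw [← QuotientGroup.mk_pow, QuotientGroup.eq_one_iff,
    mem_center_iff_eq_one_or_eq_neg_one] at hx
  rcases hx with h | h
  · exact ⟨a, h, rfl⟩
  · refine ⟨-a, by rw [hk.neg_pow, h, neg_neg], ?_⟩
    rw [QuotientGroup.eq, mem_center_iff_eq_one_or_eq_neg_one]
    simp

theorem orderOf_eq_three_iff (h3 : (3 : R) ≠ 0) {x : PSL(2, R)} :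
    orderOf x = 3 ↔
      ∃ a : SL(2, R), trace (a : Matrix (Fin 2) (Fin 2) R) = -1 ∧ (a : PSL(2, R)) = x := by
  constructor
  · intro hx
    obtain ⟨a, ha3, rfl⟩ := exists_pow_eq_one_of_odd (by decide) (hx ▸ pow_orderOf_eq_one x)
    refine ⟨a, (pow_three_eq_one_and_ne_one_iff_trace_eq_neg_one h3 a).mp ⟨ha3, ?_⟩, rfl⟩
    rintro rfl
    simp at hx
  · rintro ⟨a, ha, rfl⟩
    obtain ⟨ha3, ha1⟩ := (pow_three_eq_one_and_ne_one_iff_trace_eq_neg_one h3 a).mpr ha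
    refine orderOf_eq_prime (by rw [← QuotientGroup.mk_pow, ha3, QuotientGroup.mk_one]) ?_
    rw [Ne, QuotientGroup.eq_one_iff, mem_center_iff_eq_one_or_eq_neg_one]
    rintro (rfl | rfl)
    · exact ha1 rfl
    · simp only [coe_neg, coe_one, trace_neg, trace_one, Fintype.card_fin, Nat.cast_ofNat,
        neg_inj] at ha
      exact one_ne_zero (by linear_combination ha)

theorem orderOf_cubeRootDiagonal (h3 : (3 : R) ≠ 0) {ω : R} (hω : ω ^ 2 + ω + 1 = 0) :
    orderOf (cubeRootDiagonal hω : PSL(2, R)) = 3 :=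
  (orderOf_eq_three_iff h3).mpr ⟨_, trace_cubeRootDiagonal hω, rfl⟩

theorem isConj_of_orderOf_eq_three {F : Type*} [Field F] {ω : F} (hω : ω ^ 2 + ω + 1 = 0)
    (h3 : (3 : F) ≠ 0) {x y : PSL(2, F)} (hx : orderOf x = 3) (hy : orderOf y = 3) :
    IsConj x y := by
  have h : ∀ z : PSL(2, F), orderOf z = 3 → IsConj (cubeRootDiagonal hω : PSL(2, F)) z := by
    intro z hz
    obtain ⟨a, ha, rfl⟩ := (orderOf_eq_three_iff h3).mp hz
    exact (QuotientGroup.mk' _).map_isConj (isConj_cubeRootDiagonal hω h3 ha)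
  exact (h x hx).symm.trans (h y hy)

end Matrix.ProjectiveSpecialLinearGroup

/-- `PSL₂(𝔽₂₅) = L₂(25)` has exactly one conjugacy class consisting of elements of order `3`:
there is an element of order `3`, and any two elements of order `3` are conjugate. -/
theorem PSL2_F25_unique_conjClass_orderOf_eq_three :
    (∃ x : Matrix.ProjectiveSpecialLinearGroup (Fin 2) (GaloisField 5 2), orderOf x = 3) ∧
    ∀ x y : Matrix.ProjectiveSpecialLinearGroup (Fin 2) (GaloisField 5 2),
      orderOf x = 3 → orderOf y = 3 → IsConj x y := by
  have h3 : (3 : GaloisField 5 2) ≠ 0 := fun h ↦ by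
    have := (CharP.cast_eq_zero_iff (GaloisField 5 2) 5 3).mp (by exact_mod_cast h)
    norm_num at this
  obtain ⟨ω, hω⟩ := FiniteField.exists_sq_add_self_add_one_eq_zero (K := GaloisField 5 2)
    (by rw [GaloisField.card 5 2 two_ne_zero]; norm_num)
  exact ⟨⟨_, ProjectiveSpecialLinearGroup.orderOf_cubeRootDiagonal h3 hω⟩,
    fun _ _ ↦ ProjectiveSpecialLinearGroup.isConj_of_orderOf_eq_three hω h3⟩
end
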